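/- For every x ∈ Σ_k^n and every integer r with 1 ≤ r ≤ n, the cardinality of the ball of radius r around x satisfies |B_{k,r}(x)| ≤ Σ_{d=0}^{⌊r/2⌋} C(n,d)² · C(n−d+1, r−2d) · (k−1)^{r−2d} · k^d, where C(·,·) denotes the binomial coefficient. -/

import Mathlib

/-!
If `d_E(x, y) ≤ r` for words of length `n`, an optimal edit script has as many insertions as
deletions, say `d`, and `s` substitutions with `2 d + s ≤ r`. Replacing kept letters by a deletion
followed by an insertion of the same letter, we may assume `2 d + s ∈ {r - 1, r}`. Such a script is
recorded by a deletion mask on `x` (`C(n, d)` choices), a substitution mask on the `n - d` surviving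
letters, each substitution naming one of the `k - 1` other letters, and an insertion mask on `y`
naming the `d` inserted letters (`C(n, d) k^d` choices). One extra slot in the substitution mask,
filled when `s = r - 2 d - 1`, makes its weight exactly `r - 2 d`, giving
`C(n - d + 1, r - 2 d) (k - 1)^(r - 2 d)` choices. Every `y` in the ball is the decoding of such a
parameter, so the ball is no larger than the parameter space.
-/

namespace Levenshtein

structure Cost (α β δ : Type*) where
  delete : α → δ
  insert : β → δ
  substitute : α → β → δ

def defaultCost {α : Type*} [DecidableEq α] : Cost α α ℕ where
  delete _ := 1
  insert _ := 1
  substitute a b := if a = b then 0 else 1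

def impl {α β δ : Type*} [AddZeroClass δ] [Min δ] (C : Cost α β δ)
    (xs : List α) (y : β) (d : {r : List δ // 0 < r.length}) : {r : List δ // 0 < r.length} :=
  let ⟨ds, w⟩ := d
  xs.zip (ds.zip ds.tail) |>.foldr
    (init := ⟨[ds.getLast (List.length_pos_iff.mp w) + C.insert y], by simp⟩)
    (fun ⟨x, d₀, d₁⟩ ⟨r, w⟩ =>
      ⟨min (C.delete x + r[0]) (min (C.insert y + d₀) (C.substitute x y + d₁)) :: r, by simp⟩)

end Levenshtein

def suffixLevenshtein {α β δ : Type*} [AddZeroClass δ] [Min δ] (C : Levenshtein.Cost α β δ)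
    (xs : List α) (ys : List β) : {r : List δ // 0 < r.length} :=
  ys.foldr
    (Levenshtein.impl C xs)
    (xs.foldr (init := ⟨[0], by simp⟩) (fun a ⟨r, w⟩ => ⟨(C.delete a + r[0]) :: r, by simp⟩))

def levenshtein {α β δ : Type*} [AddZeroClass δ] [Min δ] (C : Levenshtein.Cost α β δ)
    (xs : List α) (ys : List β) : δ :=
  let ⟨r, w⟩ := suffixLevenshtein C xs ys
  r[0]

/-- Edit distance between two strings over `Fin k`, with unit costs for
substitution, deletion and insertion, and cost `0` for a match. -/
def editDist {k : ℕ} (x y : List (Fin k)) : ℕ :=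
  levenshtein Levenshtein.defaultCost x y

namespace Levenshtein

variable {α β δ : Type*} [AddZeroClass δ] [Min δ] (C : Cost α β δ)

theorem impl_cons (x : α) (xs : List α) (y : β) (d : δ) (ds : List δ) (w)
    (w' : 0 < List.length ds) :
    impl C (x :: xs) y ⟨d :: ds, w⟩ =
      let ⟨r, w⟩ := impl C xs y ⟨ds, w'⟩
      ⟨min (C.delete x + r[0]) (min (C.insert y + d) (C.substitute x y + ds[0])) :: r, by simp⟩ :=
  match ds, w' with | _ :: _, _ => rfl

theorem impl_length (xs : List α) (y : β) (d : {r : List δ // 0 < r.length})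
    (w : d.1.length = xs.length + 1) :
    (impl C xs y d).1.length = xs.length + 1 := by
  induction xs generalizing d with
  | nil => rfl
  | cons x xs ih =>
    match d, w with
    | ⟨d₁ :: d₂ :: ds, _⟩, w =>
      rw [impl_cons C x xs y d₁ (d₂ :: ds) (by simp) (by simp)]
      simpa using ih ⟨d₂ :: ds, by simp⟩ (by simpa using w)

theorem impl_nil_fst_zero (y : β) (d : {r : List δ // 0 < r.length}) (w : d.1.length = 1) :
    (impl C [] y d).1[0]'(by rw [impl_length C [] y d w]; simp) = d.1[0]'d.2 + C.insert y := by
  obtain ⟨l, hl⟩ := d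
  match l, hl, w with
  | [_], _, _ => rfl

end Levenshtein

open Levenshtein

section

variable {α β δ : Type*} [AddZeroClass δ] [Min δ] (C : Cost α β δ)

theorem suffixLevenshtein_length (xs : List α) (ys : List β) :
    (suffixLevenshtein C xs ys).1.length = xs.length + 1 := by
  induction ys with
  | nil =>
    induction xs with
    | nil => rfl
    | cons _ xs ih => simpa [suffixLevenshtein] using ih
  | cons y ys ih => exact impl_length C xs y _ ih

theorem suffixLevenshtein_cons₂ (xs : List α) (y : β) (ys : List β) :
    suffixLevenshtein C xs (y :: ys) = impl C xs y (suffixLevenshtein C xs ys) := rfl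

theorem suffixLevenshtein_cons₁ (x : α) (xs : List α) (ys : List β) :
    suffixLevenshtein C (x :: xs) ys =
      ⟨levenshtein C (x :: xs) ys :: (suffixLevenshtein C xs ys).1, by simp⟩ := by
  induction ys with
  | nil => rfl
  | cons y ys ih =>
    rcases hs : suffixLevenshtein C (x :: xs) (y :: ys) with ⟨_ | ⟨a, l⟩, hl⟩
    · simp at hl
    · refine Subtype.ext (List.cons_eq_cons.mpr ⟨?_, ?_⟩)
      · simp [levenshtein, hs]
      · have := congrArg (·.1.tail) hs
        simp only [suffixLevenshtein_cons₂ C (x :: xs), ih, List.tail_cons] at this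
        rw [← this, impl_cons C x xs y _ _ _ (by simp [suffixLevenshtein_length])]
        rfl

theorem levenshtein_nil_cons (y : β) (ys : List β) :
    levenshtein C ([] : List α) (y :: ys) = levenshtein C [] ys + C.insert y :=
  impl_nil_fst_zero C y _ (suffixLevenshtein_length C [] ys)

theorem levenshtein_cons_nil (x : α) (xs : List α) :
    levenshtein C (x :: xs) ([] : List β) = C.delete x + levenshtein C xs [] := rfl

theorem levenshtein_cons_cons (x : α) (xs : List α) (y : β) (ys : List β) :
    levenshtein C (x :: xs) (y :: ys) =
      min (C.delete x + levenshtein C xs (y :: ys))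
        (min (C.insert y + levenshtein C (x :: xs) ys)
          (C.substitute x y + levenshtein C xs ys)) := by
  conv_lhs => simp only [levenshtein]
  rw [suffixLevenshtein_cons₂, suffixLevenshtein_cons₁,
    impl_cons C x xs y _ _ _ (by simp [suffixLevenshtein_length])]
  rfl

end

namespace Levenshtein

variable {α : Type*} [DecidableEq α]

@[simp] theorem defaultCost_delete (a : α) : (defaultCost : Cost α α ℕ).delete a = 1 := rfl

@[simp] theorem defaultCost_insert (a : α) : (defaultCost : Cost α α ℕ).insert a = 1 := rfl

@[simp] theorem defaultCost_substitute (a b : α) :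
    (defaultCost : Cost α α ℕ).substitute a b = if a = b then 0 else 1 := rfl

end Levenshtein

inductive EditScript {α : Type*} : List α → List α → ℕ → ℕ → ℕ → Prop
  | nil : EditScript [] [] 0 0 0
  | keep {x y : List α} {d i s : ℕ} (a : α) :
      EditScript x y d i s → EditScript (a :: x) (a :: y) d i s
  | sub {x y : List α} {d i s : ℕ} {a b : α} :
      a ≠ b → EditScript x y d i s → EditScript (a :: x) (b :: y) d i (s + 1)
  | del {x y : List α} {d i s : ℕ} (a : α) :
      EditScript x y d i s → EditScript (a :: x) y (d + 1) i s
  | ins {x y : List α} {d i s : ℕ} (b : α) :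
      EditScript x y d i s → EditScript x (b :: y) d (i + 1) s

namespace EditScript

variable {α : Type*} {x y : List α} {d i s : ℕ}

theorem exists_of_levenshtein [DecidableEq α] (x y : List α) :
    ∃ d i s, d + i + s ≤ levenshtein defaultCost x y ∧ EditScript x y d i s := by
  induction x generalizing y with
  | nil =>
    induction y with
    | nil => exact ⟨0, 0, 0, le_rfl, .nil⟩
    | cons b y ih =>
      obtain ⟨d, i, s, hc, h⟩ := ih
      refine ⟨d, i + 1, s, ?_, .ins b h⟩
      rw [levenshtein_nil_cons, defaultCost_insert]
      omega
  | cons a x ihx =>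
    induction y with
    | nil =>
      obtain ⟨d, i, s, hc, h⟩ := ihx []
      refine ⟨d + 1, i, s, ?_, .del a h⟩
      rw [levenshtein_cons_nil, defaultCost_delete]
      omega
    | cons b y ihy =>
      obtain ⟨d₁, i₁, s₁, hc₁, h₁⟩ := ihx (b :: y)
      obtain ⟨d₂, i₂, s₂, hc₂, h₂⟩ := ihy
      obtain ⟨d₃, i₃, s₃, hc₃, h₃⟩ := ihx y
      rw [levenshtein_cons_cons]
      let P (c : ℕ) := ∃ d i s, d + i + s ≤ c ∧ EditScript (a :: x) (b :: y) d i s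
      refine min_rec' P ?_ (min_rec' P ?_ ?_)
      · exact ⟨d₁ + 1, i₁, s₁, by rw [defaultCost_delete]; omega, .del a h₁⟩
      · exact ⟨d₂, i₂ + 1, s₂, by rw [defaultCost_insert]; omega, .ins b h₂⟩
      · by_cases hab : a = b
        · subst hab
          exact ⟨d₃, i₃, s₃, by simpa using hc₃, .keep a h₃⟩
        · exact ⟨d₃, i₃, s₃ + 1, by simp only [defaultCost_substitute, hab, ↓reduceIte]; omega,
            .sub hab h₃⟩

theorem length_add (h : EditScript x y d i s) : x.length + i = y.length + d := by
  induction h <;> grind [List.length_cons]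

theorem add_le_length (h : EditScript x y d i s) : d + s ≤ x.length := by
  induction h <;> grind [List.length_cons]

/-- Each kept symbol may instead be deleted and inserted again. -/
theorem pad (h : EditScript x y d i s) {j : ℕ} (hj : d + s + j ≤ x.length) :
    EditScript x y (d + j) (i + j) s := by
  induction h generalizing j with
  | nil => simpa [show j = 0 by simpa using hj] using EditScript.nil
  | keep a h ih =>
    cases j with
    | zero => exact .keep a h
    | succ j => exact .del a (.ins a (ih (by simp at hj; omega)))
  | sub hab h ih => exact .sub hab (ih (by simp at hj; omega))
  | @del x y d i s a h ih =>
    simpa [Nat.add_right_comm d 1 j] using .del a (ih (j := j) (by simp at hj; omega))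
  | ins b h ih => simpa [Nat.add_right_comm _ 1 j] using .ins b (ih hj)

end EditScript

def IsMask {β : Type*} (l : List (Option β)) (m t : ℕ) : Prop :=
  l.length = m ∧ l.countP (·.isSome) = t

abbrev Mask (β : Type*) (m t : ℕ) : Type _ := {l : List (Option β) // IsMask l m t}

namespace IsMask

variable {β : Type*} {l : List (Option β)} {m t : ℕ}

theorem nil : IsMask ([] : List (Option β)) 0 0 := ⟨rfl, rfl⟩

theorem cons_none (h : IsMask l m t) : IsMask (none :: l) (m + 1) t := by
  simpa [IsMask] using h

theorem cons_some (b : β) (h : IsMask l m t) : IsMask (some b :: l) (m + 1) (t + 1) := by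
  simpa [IsMask] using h

theorem of_cons_none (h : IsMask (none :: l) (m + 1) t) : IsMask l m t := by
  simpa [IsMask] using h

theorem of_cons_some {b : β} (h : IsMask (some b :: l) (m + 1) (t + 1)) : IsMask l m t := by
  simpa [IsMask] using h

theorem weight_le (h : IsMask l m t) : t ≤ m := h.2 ▸ h.1 ▸ List.countP_le_length

theorem eq_replicate_none (h : IsMask l m 0) : l = List.replicate m none := by
  rw [List.eq_replicate_iff]
  refine ⟨h.1, fun o ho ↦ ?_⟩
  simpa using List.countP_eq_zero.mp h.2 o ho

end IsMask

namespace Mask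

variable {β : Type*}

instance [Finite β] (m t : ℕ) : Finite (Mask β m t) :=
  ((List.finite_length_eq (Option β) m).subset fun _ h ↦ h.1).to_subtype

def consEquiv (β : Type*) (m t : ℕ) :
    Mask β m (t + 1) ⊕ (β × Mask β m t) ≃ Mask β (m + 1) (t + 1) where
  toFun
    | .inl l => ⟨none :: l.1, l.2.cons_none⟩
    | .inr (b, l) => ⟨some b :: l.1, l.2.cons_some b⟩
  invFun
    | ⟨none :: l, h⟩ => .inl ⟨l, h.of_cons_none⟩
    | ⟨some b :: l, h⟩ => .inr (b, ⟨l, h.of_cons_some⟩)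
    | ⟨[], h⟩ => absurd h.1 (by simp)
  left_inv := by rintro (l | ⟨b, l⟩) <;> rfl
  right_inv := by rintro ⟨_ | ⟨_ | b, l⟩, h⟩ <;> first | rfl | simp [IsMask] at h

theorem card_weight_zero (m : ℕ) : Nat.card (Mask β m 0) = 1 :=
  Nat.card_eq_one_iff_exists.mpr
    ⟨⟨List.replicate m none, by simp [IsMask]⟩, fun l ↦ Subtype.ext l.2.eq_replicate_none⟩

theorem card [Finite β] (m t : ℕ) : Nat.card (Mask β m t) = m.choose t * Nat.card β ^ t := by
  induction m generalizing t with
  | zero =>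
    cases t with
    | zero => simp [card_weight_zero]
    | succ t =>
      have : IsEmpty (Mask β 0 (t + 1)) := ⟨fun l ↦ by have := l.2.weight_le; omega⟩
      simp
  | succ m ih =>
    cases t with
    | zero => simp [card_weight_zero]
    | succ t =>
      rw [← Nat.card_congr (consEquiv β m t), Nat.card_sum, Nat.card_prod, ih, ih,
        Nat.choose_succ_succ]
      ring

end Mask

section EditByMask

variable {α γ : Type*}

def deleteBy : List α → List (Option Unit) → List α
  | a :: l, none :: m => a :: deleteBy l m
  | _ :: l, some _ :: m => deleteBy l m
  | l, _ => l

def substituteBy (σ : α → γ → α) : List α → List (Option γ) → List α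
  | a :: l, none :: m => a :: substituteBy σ l m
  | a :: l, some c :: m => σ a c :: substituteBy σ l m
  | l, _ => l

def insertBy : List α → List (Option α) → List α
  | l, some b :: m => b :: insertBy l m
  | a :: l, none :: m => a :: insertBy l m
  | l, _ => l

theorem length_deleteBy_add {l : List α} {db : List (Option Unit)} {t : ℕ}
    (h : IsMask db l.length t) : (deleteBy l db).length + t = l.length := by
  induction l generalizing db t with
  | nil =>
    obtain rfl : db = [] := List.length_eq_zero_iff.mp h.1
    simpa [IsMask, deleteBy] using h.2.symm
  | cons a l ih =>
    match db, t, h with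
    | none :: db, t, h => simp [deleteBy, ← ih h.of_cons_none]; omega
    | some _ :: db, t + 1, h => simp [deleteBy, ← ih h.of_cons_some]; omega
    | some _ :: db, 0, h => simp [IsMask] at h

theorem substituteBy_append (σ : α → γ → α) {l : List α} {m : List (Option γ)}
    (h : l.length ≤ m.length) (m' : List (Option γ)) :
    substituteBy σ l (m ++ m') = substituteBy σ l m := by
  induction l generalizing m with
  | nil => cases m <;> cases m' <;> rfl
  | cons a l ih =>
    match m, h with
    | none :: m, h => simp [substituteBy, ih (by simpa using h)]
    | some c :: m, h => simp [substituteBy, ih (by simpa using h)]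

end EditByMask

theorem EditScript.exists_masks {α γ : Type*} {σ : α → γ → α}
    (hσ : ∀ a b, a ≠ b → ∃ c, σ a c = b) {x y : List α} {d i s : ℕ}
    (h : EditScript x y d i s) :
    ∃ db sm im, IsMask db x.length d ∧ IsMask sm (x.length - d) s ∧ IsMask im y.length i ∧
      insertBy (substituteBy σ (deleteBy x db) sm) im = y := by
  induction h with
  | nil => exact ⟨[], [], [], .nil, .nil, .nil, rfl⟩
  | @keep x y d i s a h ih =>
    obtain ⟨db, sm, im, hdb, hsm, him, rfl⟩ := ih
    have : (a :: x).length - d = x.length - d + 1 := by have := h.add_le_length; simp; omega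
    exact ⟨none :: db, none :: sm, none :: im, hdb.cons_none, this ▸ hsm.cons_none,
      him.cons_none, rfl⟩
  | @sub x y d i s a b hab h ih =>
    obtain ⟨db, sm, im, hdb, hsm, him, rfl⟩ := ih
    obtain ⟨c, rfl⟩ := hσ a b hab
    have : (a :: x).length - d = x.length - d + 1 := by have := h.add_le_length; simp; omega
    exact ⟨none :: db, some c :: sm, none :: im, hdb.cons_none, this ▸ hsm.cons_some c,
      him.cons_none, rfl⟩
  | del a h ih =>
    obtain ⟨db, sm, im, hdb, hsm, him, rfl⟩ := ih
    exact ⟨some () :: db, sm, im, hdb.cons_some (), by simpa using hsm, him, rfl⟩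
  | ins b h ih =>
    obtain ⟨db, sm, im, hdb, hsm, him, rfl⟩ := ih
    exact ⟨db, sm, some b :: im, hdb, hsm, him.cons_some b, by simp [insertBy]⟩

/-- The substitution mask has one slot beyond the `n - d` letters it acts on, so that padding it
makes its weight exactly `r - 2 d` whatever the parity of the number of edits. -/
abbrev EditParam (γ α : Type*) (n r : ℕ) : Type _ :=
  (d : Fin (r / 2 + 1)) × Mask Unit n d × Mask γ (n - d + 1) (r - 2 * d) × Mask α n d

namespace EditParam

variable {γ α : Type*} {n r : ℕ}

def decode (σ : α → γ → α) (x : List α) (p : EditParam γ α n r) : List α :=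
  insertBy (substituteBy σ (deleteBy x p.2.1.1) p.2.2.1.1) p.2.2.2.1

theorem card [Finite γ] [Finite α] :
    Nat.card (EditParam γ α n r) =
      ∑ d ∈ Finset.range (r / 2 + 1),
        n.choose d ^ 2 * (n - d + 1).choose (r - 2 * d) * Nat.card γ ^ (r - 2 * d) *
          Nat.card α ^ d := by
  rw [Nat.card_sigma, ← Fin.sum_univ_eq_sum_range]
  refine Finset.sum_congr rfl fun d _ ↦ ?_
  simp only [Nat.card_prod, Mask.card, Nat.card_unique, one_pow]
  ring

theorem exists_decode_eq [DecidableEq α] [Nonempty γ] {σ : α → γ → α}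
    (hσ : ∀ a b, a ≠ b → ∃ c, σ a c = b) (hrn : r ≤ n) {x y : List α}
    (hx : x.length = n) (hy : y.length = n) (hxy : levenshtein defaultCost x y ≤ r) :
    ∃ p : EditParam γ α n r, p.decode σ x = y := by
  obtain ⟨d₀, i₀, s, hcost, h₀⟩ := EditScript.exists_of_levenshtein x y
  have hi₀ : d₀ = i₀ := by have := h₀.length_add; omega
  subst hi₀
  have := h₀.add_le_length
  -- turn `(r - 2 d₀ - s) / 2` kept letters into a deletion followed by an insertion
  set d := d₀ + (r - 2 * d₀ - s) / 2
  have h : EditScript x y d d s := h₀.pad (by omega)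
  obtain ⟨db, sm, im, hdb, hsm, him, hdec⟩ := h.exists_masks hσ
  have hsmlen : (deleteBy x db).length ≤ sm.length := by
    have := length_deleteBy_add hdb; have := hsm.1; omega
  obtain ⟨o, ho⟩ : ∃ o : Option γ, IsMask (sm ++ [o]) (n - d + 1) (r - 2 * d) := by
    rcases Nat.lt_or_ge s (r - 2 * d) with hs | hs
    · exact ⟨some (Classical.arbitrary γ), by simp [IsMask, hsm.1, hsm.2, hx]; omega⟩
    · exact ⟨none, by simp [IsMask, hsm.1, hsm.2, hx]; omega⟩
  refine ⟨⟨⟨d, by omega⟩, ⟨db, hx ▸ hdb⟩, ⟨sm ++ [o], ho⟩, ⟨im, hy ▸ him⟩⟩, ?_⟩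
  rw [decode, substituteBy_append σ hsmlen, hdec]

end EditParam

theorem ball_card_upper_bound_general (k n r : ℕ) (hk : 2 ≤ k)
    (hrn : r ≤ n) (x : Fin n → Fin k) :
    Nat.card {y : Fin n → Fin k // editDist (List.ofFn x) (List.ofFn y) ≤ r} ≤
      ∑ d ∈ Finset.range (r / 2 + 1),
        (n.choose d) ^ 2 * ((n - d + 1).choose (r - 2 * d)) *
          (k - 1) ^ (r - 2 * d) * k ^ d := by
  obtain ⟨m, rfl⟩ : ∃ m, k = m + 1 := ⟨k - 1, by omega⟩
  have : Nonempty (Fin m) := ⟨⟨0, by omega⟩⟩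
  choose p hp using fun y : {y : Fin n → Fin (m + 1) // editDist (List.ofFn x) (List.ofFn y) ≤ r} ↦
    EditParam.exists_decode_eq (γ := Fin m) (σ := Fin.succAbove)
      (fun a b hab ↦ Fin.exists_succAbove_eq hab.symm) hrn List.length_ofFn List.length_ofFn y.2
  calc _ ≤ Nat.card (EditParam (Fin m) (Fin (m + 1)) n r) :=
        Nat.card_le_card_of_injective p fun y y' h ↦
          Subtype.ext <| List.ofFn_injective <| by rw [← hp, ← hp, h]
    _ = _ := by simp [EditParam.card]

/-- Upper bound on the size of the ball of radius `r` around `x ∈ Σ_k^n`: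
`|B_{k,r}(x)| ≤ Σ_{d=0}^{⌊r/2⌋} C(n,d)²·C(n−d+1, r−2d)·(k−1)^{r−2d}·k^d`. -/
theorem ball_card_upper_bound (k n r : ℕ) (hk : 2 ≤ k)
    (hr1 : 1 ≤ r) (hrn : r ≤ n) (x : Fin n → Fin k) :
    Nat.card {y : Fin n → Fin k // editDist (List.ofFn x) (List.ofFn y) ≤ r} ≤
      ∑ d ∈ Finset.range (r / 2 + 1),
        (n.choose d) ^ 2 * ((n - d + 1).choose (r - 2 * d)) *
          (k - 1) ^ (r - 2 * d) * k ^ d :=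
  ball_card_upper_bound_general k n r hk hrn x
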